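/- For every integer n ≥ 3, the coefficient of x^n in P_n equals 2^{n-2}, and |P_n(x)| ≤ 1 for all x ∈ [-1,1]; consequently the monic polynomial 2^{-(n-2)} P_n has supremum norm at most 2^{-(n-2)} on [-1,1]. -/

import Mathlib

/-!
For `p = 2`, `f N K m 2` is the coefficient of `t ^ K` in `(1 + t) ^ m * (2 + t) ^ N`; hence
`f (N + 1) K = 2 f N K + f N (K - 1)` and `f N 0 = 2 ^ N`, which gives the leading coefficient.
Reindexed through `c`, this recursion in `N` becomes the Chebyshev recurrence
`P_{n+2} = 2 x P_{n+1} - P_n` (once `2 m ≤ n + 1`). Together with `P_3 = 2x³ - 2x` and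
`P_4 = 4x⁴ - 5x² + 1` it gives `P_n(cos θ) = -sin θ sin((n - 1) θ)` for `n ≥ 3`,
so `|P_n| ≤ 1` on `[-1, 1]`.
-/
open Finset Polynomial Real

noncomputable section

/-- Binomial coefficient `C(a, b)` for integer lower index, zero when `b < 0` or `b > a`. -/
def chooseZ (a : ℕ) (b : ℤ) : ℤ := if 0 ≤ b then (a.choose b.toNat : ℤ) else 0

/-- `f n k m p = ∑_{i=0}^{n} (-1)^i C(n,i) C(np+m-ip, n+k)`. -/
def f (n : ℕ) (k : ℤ) (m p : ℕ) : ℤ :=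
  ∑ i ∈ Finset.range (n + 1),
    (-1) ^ i * (n.choose i : ℤ) * chooseZ (n * p + m - i * p) ((n : ℤ) + k)

/-- The coefficients `c(n,k,m,p)`. -/
def c (n : ℕ) (k : ℤ) (m p : ℕ) : ℤ :=
  if 0 ≤ k ∧ k ≤ (n : ℤ) ∧ (n : ℤ) % 2 = k % 2 ∧ 2 * (m : ℤ) ≤ (n : ℤ) + k then
    (-1) ^ ((((n : ℤ) - k) / 2).toNat) *
      f ((((n : ℤ) + k - 2 * m) / 2).toNat) (((n : ℤ) - k) / 2) m p
  else 0

/-- The polynomial `P_{n,m,p}(x) = ∑_{k=0}^n c(n,k,m,p) x^k`, as a real polynomial. -/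
def P (n m p : ℕ) : Polynomial ℝ :=
  ∑ k ∈ Finset.range (n + 1), Polynomial.C ((c n (k : ℤ) m p : ℝ)) * Polynomial.X ^ k

lemma chooseZ_of_neg (a : ℕ) {b : ℤ} (hb : b < 0) : chooseZ a b = 0 :=
  if_neg (by omega)

lemma chooseZ_of_lt (a : ℕ) {b : ℤ} (h : (a : ℤ) < b) : chooseZ a b = 0 := by
  unfold chooseZ
  split_ifs
  · exact_mod_cast Nat.choose_eq_zero_of_lt (by omega)
  · rfl

lemma chooseZ_succ (a : ℕ) (b : ℤ) : chooseZ (a + 1) b = chooseZ a b + chooseZ a (b - 1) := by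
  rcases lt_trichotomy b 0 with hb | rfl | hb
  · simp [chooseZ_of_neg, hb, show b - 1 < 0 by omega]
  · simp [chooseZ]
  · obtain ⟨t, rfl⟩ : ∃ t : ℕ, b = t + 1 := ⟨(b - 1).toNat, by omega⟩
    simp only [chooseZ, if_pos (by omega : (0 : ℤ) ≤ t + 1),
      if_pos (by omega : (0 : ℤ) ≤ t + 1 - 1),
      show ((t : ℤ) + 1).toNat = t + 1 by omega, show ((t : ℤ) + 1 - 1).toNat = t by omega,
      Nat.choose_succ_succ', Nat.cast_add, add_comm]

lemma chooseZ_add_two (a : ℕ) (b : ℤ) :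
    chooseZ (a + 2) b = chooseZ a b + 2 * chooseZ a (b - 1) + chooseZ a (b - 2) := by
  rw [chooseZ_succ, chooseZ_succ, chooseZ_succ, sub_sub, one_add_one_eq_two]
  ring

lemma f_eq_zero_of_lt (N m p : ℕ) {K : ℤ} (hK : ((N * p + m : ℕ) : ℤ) < N + K) :
    f N K m p = 0 :=
  Finset.sum_eq_zero fun i _ => by rw [chooseZ_of_lt _ (by omega), mul_zero]

lemma f_two_eq_sum (N m : ℕ) (K : ℤ) :
    f N K m 2 =
      ∑ i ∈ range (N + 1),
        (N.choose i : ℤ) * ((-1) ^ i * chooseZ (N * 2 + m - i * 2) (N + K)) :=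
  Finset.sum_congr rfl fun _ _ => by ring

lemma f_succ (N m : ℕ) (K : ℤ) : f (N + 1) K m 2 = 2 * f N K m 2 + f N (K - 1) m 2 := by
  rw [f_two_eq_sum, Finset.sum_choose_succ_mul
      (fun i _ => (-1) ^ i * chooseZ ((N + 1) * 2 + m - i * 2) ((N + 1 : ℕ) + K)),
    ← Finset.sum_add_distrib, f_two_eq_sum, f_two_eq_sum, Finset.mul_sum,
    ← Finset.sum_add_distrib]
  refine Finset.sum_congr rfl fun i hi => ?_
  have hi : i ≤ N := Nat.lt_succ_iff.mp (Finset.mem_range.mp hi)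
  rw [show (N + 1) * 2 + m - i * 2 = N * 2 + m - i * 2 + 2 by omega,
    show (N + 1) * 2 + m - (i + 1) * 2 = N * 2 + m - i * 2 by omega, chooseZ_add_two,
    show ((N + 1 : ℕ) : ℤ) + K - 1 = N + K by push_cast; ring,
    show ((N + 1 : ℕ) : ℤ) + K - 2 = N + (K - 1) by push_cast; ring, pow_succ]
  ring

lemma f_of_neg (m : ℕ) {K : ℤ} (hK : K < 0) : ∀ N, f N K m 2 = 0
  | 0 => by simp [f, chooseZ_of_neg _ hK]
  | N + 1 => by rw [f_succ, f_of_neg m hK N, f_of_neg m (by omega) N]; ring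

lemma f_zero (m : ℕ) : ∀ N, f N 0 m 2 = 2 ^ N
  | 0 => by simp [f, chooseZ]
  | N + 1 => by rw [f_succ, f_zero m N, f_of_neg m (by omega) N]; ring

lemma c_of_neg {n : ℕ} {k : ℤ} (m p : ℕ) (hk : k < 0) : c n k m p = 0 :=
  if_neg (by omega)

lemma c_of_lt {n : ℕ} {k : ℤ} (m p : ℕ) (hk : (n : ℤ) < k) : c n k m p = 0 :=
  if_neg (by omega)

lemma c_of_emod_ne {n : ℕ} {k : ℤ} (m p : ℕ) (hk : (n : ℤ) % 2 ≠ k % 2) : c n k m p = 0 :=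
  if_neg (by omega)

lemma c_add_add (N K m p : ℕ) (hK : K ≤ N + m) :
    c (N + K + m) (N + m - K) m p = (-1) ^ K * f N K m p := by
  rw [c, if_pos (by push_cast; omega)]
  rw [show ((N + K + m : ℕ) - (N + m - K : ℤ)) / 2 = K by push_cast; omega,
    show ((N + K + m : ℕ) + (N + m - K : ℤ) - 2 * m) / 2 = N by push_cast; omega]
  simp

lemma c_eq_neg_one_pow_mul_f {n : ℕ} {k : ℤ} {m : ℕ} (N K : ℕ) (hn : n = N + K + m)
    (hk : k = N + m - K) : c n k m 2 = (-1) ^ K * f N K m 2 := by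
  subst hn hk
  rcases le_or_gt K (N + m) with hK | hK
  · exact c_add_add N K m 2 hK
  · rw [c_of_neg _ _ (by omega), f_eq_zero_of_lt _ _ _ (by push_cast; omega), mul_zero]

lemma c_succ (m n : ℕ) (hn : 2 * m ≤ n + 1) {k : ℤ} (hk : -1 ≤ k) :
    c (n + 2) (k + 1) m 2 = 2 * c (n + 1) k m 2 - c n (k + 1) m 2 := by
  rcases Int.emod_two_eq_zero_or_one ((n : ℤ) + k) with hpar | hpar
  · rw [c_of_emod_ne _ _ (by push_cast; omega), c_of_emod_ne _ _ (by push_cast; omega),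
      c_of_emod_ne _ _ (by omega)]
    ring
  rcases lt_or_ge ((n : ℤ) + 1) k with hkn | hkn
  · rw [c_of_lt _ _ (by push_cast; omega), c_of_lt _ _ (by push_cast; omega),
      c_of_lt _ _ (by omega)]
    ring
  obtain ⟨N, K, hnNK, rfl⟩ : ∃ N K : ℕ, n + 1 = N + K + m ∧ k = N + m - K :=
    ⟨((n + k + 1) / 2 - m).toNat, ((n + 1 - k) / 2).toNat, by omega, by omega⟩
  rcases K with _ | K
  · rw [c_eq_neg_one_pow_mul_f (N + 1) 0 (by omega) (by push_cast; omega),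
      c_eq_neg_one_pow_mul_f N 0 hnNK rfl, c_of_lt _ _ (by push_cast; omega), f_succ]
    push_cast
    rw [f_of_neg m (by norm_num : (-1 : ℤ) < 0) N]
    ring
  · rw [c_eq_neg_one_pow_mul_f (N + 1) (K + 1) (by omega) (by push_cast; omega),
      c_eq_neg_one_pow_mul_f N (K + 1) hnNK rfl,
      c_eq_neg_one_pow_mul_f N K (by omega) (by push_cast; omega), f_succ]
    push_cast
    rw [add_sub_cancel_right]
    ring

lemma coeff_P (n m p k : ℕ) : (P n m p).coeff k = c n k m p := by
  simp only [P, finsetSum_coeff, coeff_C_mul_X_pow, Finset.sum_ite_eq, Finset.mem_range]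
  split_ifs with hk
  · rfl
  · rw [c_of_lt _ _ (by omega), Int.cast_zero]

lemma P_succ_succ (m n : ℕ) (hn : 2 * m ≤ n + 1) :
    P (n + 2) m 2 = 2 * X * P (n + 1) m 2 - P n m 2 := by
  ext (_ | k)
  · rw [coeff_sub, mul_assoc, coeff_ofNat_mul, coeff_X_mul_zero, coeff_P, coeff_P,
      show ((0 : ℕ) : ℤ) = -1 + 1 by norm_num, c_succ m n hn le_rfl, c_of_neg _ _ (by norm_num)]
    push_cast
    ring
  · rw [coeff_sub, mul_assoc, coeff_ofNat_mul, coeff_X_mul, coeff_P, coeff_P, coeff_P,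
      Nat.cast_succ, c_succ m n hn (by omega)]
    push_cast
    ring

lemma eval_P_three_two_two (x : ℝ) : (P 3 2 2).eval x = 2 * x ^ 3 - 2 * x := by
  have h0 : c 3 0 2 2 = 0 := by decide
  have h1 : c 3 1 2 2 = -2 := by decide
  have h2 : c 3 2 2 2 = 0 := by decide
  have h3 : c 3 3 2 2 = 2 := by decide
  simp [P, Finset.sum_range_succ, h0, h1, h2, h3]
  ring

lemma eval_P_four_two_two (x : ℝ) : (P 4 2 2).eval x = 4 * x ^ 4 - 5 * x ^ 2 + 1 := by
  have h0 : c 4 0 2 2 = 1 := by decide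
  have h1 : c 4 1 2 2 = 0 := by decide
  have h2 : c 4 2 2 2 = -5 := by decide
  have h3 : c 4 3 2 2 = 0 := by decide
  have h4 : c 4 4 2 2 = 4 := by decide
  simp [P, Finset.sum_range_succ, h0, h1, h2, h3, h4]
  ring

theorem eval_P_cos :
    ∀ n, 3 ≤ n → ∀ θ : ℝ, (P n 2 2).eval (cos θ) = -(sin θ * sin ((n - 1) * θ))
  | 3, _, θ => by
    rw [eval_P_three_two_two]
    norm_num [sin_two_mul]
    linear_combination 2 * cos θ * sin_sq_add_cos_sq θ
  | 4, _, θ => by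
    rw [eval_P_four_two_two]
    norm_num [show (3 : ℝ) * θ = 2 * θ + θ by ring, sin_add, sin_two_mul, cos_two_mul]
    linear_combination (4 * cos θ ^ 2 - 1) * sin_sq_add_cos_sq θ
  | n + 5, _, θ => by
    rw [P_succ_succ 2 (n + 3) (by omega), eval_sub, eval_mul, eval_mul, eval_ofNat, eval_X,
      eval_P_cos (n + 4) (by omega), eval_P_cos (n + 3) (by omega)]
    push_cast
    rw [show ((n : ℝ) + 5 - 1) * θ = (n + 3) * θ + θ by ring,
      show ((n : ℝ) + 4 - 1) * θ = (n + 3) * θ by ring,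
      show ((n : ℝ) + 3 - 1) * θ = (n + 3) * θ - θ by ring, sin_add, sin_sub]
    ring

lemma coeff_P_self (m n : ℕ) (hmn : m ≤ n) : (P n m 2).coeff n = 2 ^ (n - m) := by
  rw [coeff_P, c_eq_neg_one_pow_mul_f (n - m) 0 (by omega) (by omega), Nat.cast_zero, f_zero]
  simp

lemma abs_eval_P_le_one {n : ℕ} (hn : 3 ≤ n) {x : ℝ} (hx : x ∈ Set.Icc (-1 : ℝ) 1) :
    |(P n 2 2).eval x| ≤ 1 := by
  rw [← cos_arccos hx.1 hx.2, eval_P_cos n hn, abs_neg, abs_mul]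
  exact mul_le_one₀ (abs_sin_le_one _) (abs_nonneg _) (abs_sin_le_one _)

/-- For n ≥ 3, the coefficient of `x^n` in `P_n` is `2^{n-2}`, `|P_n(x)| ≤ 1`
on [-1,1], and hence the monic polynomial `2^{-(n-2)} P_n` has sup norm at most `2^{-(n-2)}`
on [-1,1]. -/
theorem statement5 (n : ℕ) (hn : 3 ≤ n) :
    (P n 2 2).coeff n = 2 ^ (n - 2) ∧
    (∀ x ∈ Set.Icc (-1 : ℝ) 1, |(P n 2 2).eval x| ≤ 1) ∧
    (∀ x ∈ Set.Icc (-1 : ℝ) 1,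
      |(Polynomial.C (((2 : ℝ) ^ (n - 2))⁻¹) * P n 2 2).eval x| ≤ ((2 : ℝ) ^ (n - 2))⁻¹) := by
  refine ⟨coeff_P_self 2 n (by omega), fun x hx => abs_eval_P_le_one hn hx, fun x hx => ?_⟩
  rw [eval_mul, eval_C, abs_mul, abs_of_pos (by positivity)]
  exact mul_le_of_le_one_right (by positivity) (abs_eval_P_le_one hn hx)
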